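/- For a Poisson algebra (A, {·,·}), the pair (A, D_A) with the bracket [a du, b dv] = a{u,b}dv + b{a,v}du + ab d{u,v} and the anchor π♯ : D_A → Der(A) determined by π♯(du)(v) = {u,v} forms a Lie-Rinehart algebra: namely [α, aβ] = π♯(α)(a)β + a[α,β] and π♯(aα) = a·π♯(α) for all a ∈ A, α, β ∈ D_A. -/

import Mathlib

/-!
The bracket is first defined on the free module `A →₀ A`, where `single u a` stands for
`a du`, by the generator formula. It vanishes against the kernel `kerTotal` of
`A →₀ A → Ω[A⁄ℝ]`, because the relations `d(x + y) = dx + dy`, `d(xy) = x dy + y dx` and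
`d(algebraMap r) = 0` are respected by the additivity, the Leibniz rule and the
`algebraMap`-annihilation of `{·,·}` in its first slot; antisymmetry takes care of the second
slot. So it descends to an `ℝ`-bilinear map on `Ω[A⁄ℝ]`. Every remaining identity is additive
in each argument, hence reduces to generators `a du`, where the Leibniz rule and Jacobi
identity of `{·,·}` finish the computation.
-/

/-- A Poisson bracket on a commutative ℝ-algebra `A`: an ℝ-bilinear Lie bracket
which is a derivation in each argument. -/
def IsPoissonBracket {A : Type*} [CommRing A] [Algebra ℝ A] (P : A → A → A) : Prop :=
  (∀ a b c : A, P (a + b) c = P a c + P b c) ∧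
  (∀ a b c : A, P a (b + c) = P a b + P a c) ∧
  (∀ (r : ℝ) (a b : A), P (r • a) b = r • P a b) ∧
  (∀ a : A, P a a = 0) ∧
  (∀ a b c : A, P a (P b c) + P b (P c a) + P c (P a b) = 0) ∧
  (∀ a b c : A, P a (b * c) = P a b * c + b * P a c)

namespace LinearMap

variable {R M N Q : Type*} [CommRing R] [AddCommGroup M] [AddCommGroup N] [AddCommGroup Q]
  [Module R M] [Module R N] [Module R Q]

noncomputable def descend₂ (g : M →ₗ[R] N) (hg : Function.Surjective g)
    (f : M →ₗ[R] M →ₗ[R] Q) (hl : ker g ≤ ker f) (hr : ker g ≤ ker f.flip) :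
    N →ₗ[R] N →ₗ[R] Q :=
  (f.liftQ₂ (ker g) (ker g) hl hr).compl₁₂ (g.quotKerEquivOfSurjective hg).symm.toLinearMap
    (g.quotKerEquivOfSurjective hg).symm.toLinearMap

@[simp]
theorem descend₂_apply_apply (g : M →ₗ[R] N) (hg : Function.Surjective g)
    (f : M →ₗ[R] M →ₗ[R] Q) (hl : ker g ≤ ker f) (hr : ker g ≤ ker f.flip) (x y : M) :
    descend₂ g hg f hl hr (g x) (g y) = f x y := by
  simp [descend₂, quotKerEquivOfSurjective_symm_apply]

end LinearMap

namespace KaehlerDifferential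

variable {R S : Type*} [CommRing R] [CommRing S] [Algebra R S]

theorem smul_D_induction {p : Ω[S⁄R] → Prop} (zero : p 0)
    (add : ∀ α β, p α → p β → p (α + β)) (smul_D : ∀ a u : S, p (a • D R S u)) (ω : Ω[S⁄R]) :
    p ω := by
  obtain ⟨x, rfl⟩ := linearCombination_surjective R S ω
  induction x using Finsupp.induction_linear with
  | zero => simpa using zero
  | add x y hx hy => simpa using add _ _ hx hy
  | single u a => simpa using smul_D a u

end KaehlerDifferential

namespace IsPoissonBracket

open KaehlerDifferential

variable {A : Type*} [CommRing A] [Algebra ℝ A] {P : A → A → A} (hP : IsPoissonBracket P)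

section
include hP

theorem add_left (a b c : A) : P (a + b) c = P a c + P b c := hP.1 a b c
theorem add_right (a b c : A) : P a (b + c) = P a b + P a c := hP.2.1 a b c
theorem smul_left (r : ℝ) (a b : A) : P (r • a) b = r • P a b := hP.2.2.1 r a b
theorem self_eq_zero (a : A) : P a a = 0 := hP.2.2.2.1 a
theorem jacobi (a b c : A) : P a (P b c) + P b (P c a) + P c (P a b) = 0 := hP.2.2.2.2.1 a b c
theorem mul_right (a b c : A) : P a (b * c) = P a b * c + b * P a c := hP.2.2.2.2.2 a b c

theorem skew (a b : A) : P a b = -P b a := by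
  have h := hP.self_eq_zero (a + b)
  rw [hP.add_left, hP.add_right, hP.add_right, hP.self_eq_zero, hP.self_eq_zero] at h
  linear_combination (norm := abel) h

theorem smul_right (r : ℝ) (a b : A) : P a (r • b) = r • P a b := by
  rw [hP.skew, hP.smul_left, hP.skew b, smul_neg, neg_neg]

theorem mul_left (a b c : A) : P (a * b) c = a * P b c + b * P a c := by
  rw [hP.skew, hP.mul_right, hP.skew c, hP.skew c]
  ring

theorem one_left (a : A) : P 1 a = 0 := by
  have h := hP.mul_left 1 1 a
  rw [one_mul] at h
  linear_combination -h

theorem algebraMap_left (r : ℝ) (a : A) : P (algebraMap ℝ A r) a = 0 := by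
  rw [Algebra.algebraMap_eq_smul_one, hP.smul_left, hP.one_left, smul_zero]

theorem neg_right (a b : A) : P a (-b) = -P a b := by
  rw [← neg_one_smul ℝ b, hP.smul_right, neg_one_smul]

end

noncomputable def hamiltonian (u : A) : Derivation ℝ A A where
  toFun := P u
  map_add' := hP.add_right u
  map_smul' r := hP.smul_right r u
  map_one_eq_zero' := by rw [LinearMap.coe_mk, AddHom.coe_mk, hP.skew, hP.one_left, neg_zero]
  leibniz' b c := by
    simp only [LinearMap.coe_mk, AddHom.coe_mk, hP.mul_right, smul_eq_mul]
    ring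

noncomputable def hamiltonianDerivation : Derivation ℝ A (Derivation ℝ A A) where
  toFun := hP.hamiltonian
  map_add' u u' := Derivation.ext (hP.add_left u u')
  map_smul' r u := Derivation.ext (hP.smul_left r u)
  map_one_eq_zero' := Derivation.ext hP.one_left
  leibniz' u u' := Derivation.ext fun v => by
    simp only [LinearMap.coe_mk, AddHom.coe_mk, Derivation.add_apply, Derivation.smul_apply,
      hamiltonian, Derivation.mk_coe, smul_eq_mul, hP.mul_left]

noncomputable def anchor : Ω[A⁄ℝ] →ₗ[A] (A →ₗ[ℝ] A) :=
  ({ toFun := fun δ => δ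
     map_add' := Derivation.coe_add_linearMap
     map_smul' := Derivation.coe_smul_linearMap } : Derivation ℝ A A →ₗ[A] (A →ₗ[ℝ] A)) ∘ₗ
    hP.hamiltonianDerivation.liftKaehlerDifferential

theorem anchor_D (u v : A) : hP.anchor (D ℝ A u) v = P u v := by
  simp [anchor, hamiltonianDerivation, hamiltonian]

theorem anchor_apply_mul (α : Ω[A⁄ℝ]) (a b : A) :
    hP.anchor α (a * b) = hP.anchor α a * b + a * hP.anchor α b := by
  simp only [anchor, LinearMap.coe_comp, Function.comp_apply, LinearMap.coe_mk, AddHom.coe_mk,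
    Derivation.coeFn_coe, Derivation.leibniz, smul_eq_mul]
  ring

noncomputable def bracketSmulD (u v : A) : A →ₗ[ℝ] A →ₗ[ℝ] Ω[A⁄ℝ] :=
  LinearMap.mk₂ ℝ
    (fun a b => (a * P u b) • D ℝ A v + (b * P a v) • D ℝ A u + (a * b) • D ℝ A (P u v))
    (fun a a' b => by simp only [hP.add_left]; module)
    (fun r a b => by rw [hP.smul_left]; simp only [Algebra.smul_def]; module)
    (fun a b b' => by simp only [hP.add_right]; module)
    (fun r a b => by rw [hP.smul_right]; simp only [Algebra.smul_def]; module)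

noncomputable def bracketFinsupp : (A →₀ A) →ₗ[ℝ] (A →₀ A) →ₗ[ℝ] Ω[A⁄ℝ] :=
  Finsupp.lsum ℝ fun u => (Finsupp.lsum ℝ fun v => (hP.bracketSmulD u v).flip).flip

theorem bracketFinsupp_single_single (u a v b : A) :
    hP.bracketFinsupp (Finsupp.single u a) (Finsupp.single v b) =
      (a * P u b) • D ℝ A v + (b * P a v) • D ℝ A u + (a * b) • D ℝ A (P u v) := by
  simp [bracketFinsupp, bracketSmulD]

theorem bracketFinsupp_flip : hP.bracketFinsupp.flip = -hP.bracketFinsupp := by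
  refine Finsupp.lhom_ext fun v b => Finsupp.lhom_ext fun u a => ?_
  simp only [LinearMap.flip_apply, LinearMap.neg_apply, bracketFinsupp_single_single,
    hP.skew v u, hP.skew v a, hP.skew b u, map_neg]
  module

-- `bracketFinsupp` is only `ℝ`-linear, so closing under the `A`-span of the relations needs the
-- extra multiplier `c`.
theorem bracketFinsupp_smul_kerTotal {x : A →₀ A} (hx : x ∈ kerTotal ℝ A) (c : A) :
    hP.bracketFinsupp (c • x) = 0 := by
  induction hx using Submodule.span_induction generalizing c with
  | mem x hx =>
    refine Finsupp.lhom_ext fun v b => ?_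
    rcases hx with (⟨⟨x, y⟩, rfl⟩ | ⟨⟨x, y⟩, rfl⟩) | ⟨r, rfl⟩ <;>
      simp only [smul_sub, smul_add, Finsupp.smul_single, smul_eq_mul, mul_one, map_sub, map_add,
        map_zero, LinearMap.sub_apply, LinearMap.add_apply, LinearMap.zero_apply,
        bracketFinsupp_single_single, hP.add_left, hP.mul_left, hP.algebraMap_left,
        Derivation.leibniz, Derivation.map_algebraMap] <;>
      module
  | zero => rw [smul_zero, map_zero]
  | add x y _ _ hx hy => rw [smul_add, map_add, hx, hy, add_zero]
  | smul a x _ hx => rw [smul_smul, hx]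

noncomputable def linearCombinationD : (A →₀ A) →ₗ[ℝ] Ω[A⁄ℝ] :=
  (Finsupp.linearCombination A (D ℝ A)).restrictScalars ℝ

theorem ker_linearCombinationD_le :
    LinearMap.ker linearCombinationD ≤ LinearMap.ker hP.bracketFinsupp := by
  intro x hx
  rw [LinearMap.mem_ker, ← one_smul A x]
  exact hP.bracketFinsupp_smul_kerTotal (by rwa [← kerTotal_eq]) 1

noncomputable def bracket : Ω[A⁄ℝ] →ₗ[ℝ] Ω[A⁄ℝ] →ₗ[ℝ] Ω[A⁄ℝ] :=
  LinearMap.descend₂ linearCombinationD (linearCombination_surjective ℝ A) hP.bracketFinsupp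
    hP.ker_linearCombinationD_le
    (by rw [bracketFinsupp_flip, LinearMap.ker_neg]; exact hP.ker_linearCombinationD_le)

theorem linearCombinationD_surjective : Function.Surjective (linearCombinationD (A := A)) :=
  linearCombination_surjective ℝ A

theorem bracket_linearCombinationD (x y : A →₀ A) :
    hP.bracket (linearCombinationD x) (linearCombinationD y) = hP.bracketFinsupp x y :=
  LinearMap.descend₂_apply_apply ..

theorem bracket_smul_D (a b u v : A) :
    hP.bracket (a • D ℝ A u) (b • D ℝ A v) =
      (a * P u b) • D ℝ A v + (b * P a v) • D ℝ A u + (a * b) • D ℝ A (P u v) := by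
  have h (a u : A) : linearCombinationD (Finsupp.single u a) = a • D ℝ A u :=
    Finsupp.linearCombination_single A a u
  rw [← h, ← h, bracket_linearCombinationD, bracketFinsupp_single_single]

theorem bracket_swap (α β : Ω[A⁄ℝ]) : hP.bracket β α = -hP.bracket α β := by
  obtain ⟨x, rfl⟩ := linearCombinationD_surjective α
  obtain ⟨y, rfl⟩ := linearCombinationD_surjective β
  rw [bracket_linearCombinationD, bracket_linearCombinationD, ← LinearMap.flip_apply,
    bracketFinsupp_flip, LinearMap.neg_apply, LinearMap.neg_apply]

theorem bracket_smul_right (a : A) (α β : Ω[A⁄ℝ]) :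
    hP.bracket α (a • β) = hP.anchor α a • β + a • hP.bracket α β := by
  induction α using smul_D_induction generalizing β with
  | zero => simp
  | add α α' hα hα' =>
    simp only [map_add, LinearMap.add_apply, hα, hα', add_smul, smul_add]
    abel
  | smul_D c u =>
    induction β using smul_D_induction with
    | zero => simp
    | add β β' hβ hβ' =>
      simp only [smul_add, map_add, hβ, hβ']
      abel
    | smul_D b v =>
      rw [smul_smul, bracket_smul_D, bracket_smul_D, map_smul, LinearMap.smul_apply, anchor_D,
        hP.mul_right]
      module

theorem bracket_jacobi_smul_D (a b c u v w : A) :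
    hP.bracket (a • D ℝ A u) (hP.bracket (b • D ℝ A v) (c • D ℝ A w)) +
      hP.bracket (b • D ℝ A v) (hP.bracket (c • D ℝ A w) (a • D ℝ A u)) +
      hP.bracket (c • D ℝ A w) (hP.bracket (a • D ℝ A u) (b • D ℝ A v)) = 0 := by
  have jac_D := congrArg (D ℝ A) (hP.jacobi u v w)
  have jac_u := hP.jacobi a v w
  have jac_v := hP.jacobi u b w
  have jac_w := hP.jacobi u v c
  simp only [map_add, map_zero] at jac_D
  simp only [bracket_smul_D, map_add, hP.mul_right]
  -- Ordering the letters as `u < a < v < b < w < c` inside every `P`, what is left over is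
  -- exactly the four instances of the Jacobi identity above.
  simp only [hP.skew w a, hP.skew b u, hP.skew v u, hP.skew v a, hP.skew c u, hP.skew w u,
    hP.skew c v, hP.skew w b, hP.skew w v, hP.neg_right, map_neg] at jac_u jac_v jac_w jac_D ⊢
  linear_combination (norm := module)
    (b * c * jac_u) • D ℝ A u + (a * c * jac_v) • D ℝ A v + (a * b * jac_w) • D ℝ A w +
      (a * b * c) • jac_D

theorem bracket_jacobi (α β γ : Ω[A⁄ℝ]) :
    hP.bracket α (hP.bracket β γ) + hP.bracket β (hP.bracket γ α) +
      hP.bracket γ (hP.bracket α β) = 0 := by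
  induction α using smul_D_induction generalizing β γ with
  | zero => simp
  | add α α' hα hα' =>
    simp only [map_add, LinearMap.add_apply]
    linear_combination (norm := module) hα β γ + hα' β γ
  | smul_D a u =>
    induction β using smul_D_induction generalizing γ with
    | zero => simp
    | add β β' hβ hβ' =>
      simp only [map_add, LinearMap.add_apply]
      linear_combination (norm := module) hβ γ + hβ' γ
    | smul_D b v =>
      induction γ using smul_D_induction with
      | zero => simp
      | add γ γ' hγ hγ' =>
        simp only [map_add, LinearMap.add_apply]
        linear_combination (norm := module) hγ + hγ'
      | smul_D c w => exact hP.bracket_jacobi_smul_D a b c u v w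

end IsPoissonBracket

open KaehlerDifferential in
/-- For a Poisson algebra `(A, {·,·})`, the bracket
`[a du, b dv] = a{u,b} dv + b{a,v} du + ab d{u,v}` on the Kähler differentials
`D_A = Ω[A⁄ℝ]`, together with the `A`-linear anchor `π♯ : D_A → Der(A)`
determined by `π♯(du)(v) = {u,v}`, turns `(A, D_A)` into a Lie–Rinehart algebra:
`[α, a β] = π♯(α)(a) • β + a • [α, β]` and `π♯(a α) = a · π♯(α)`. -/
theorem kaehler_differentials_lie_rinehart {A : Type*} [CommRing A] [Algebra ℝ A]
    (P : A → A → A) (hP : IsPoissonBracket P) :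
    ∃ (B : Ω[A⁄ℝ] → Ω[A⁄ℝ] → Ω[A⁄ℝ]) (ρ : Ω[A⁄ℝ] →ₗ[A] (A →ₗ[ℝ] A)),
      -- B is a Lie bracket extending the generator formula
      (∀ α β γ : Ω[A⁄ℝ], B (α + β) γ = B α γ + B β γ) ∧
      (∀ α β γ : Ω[A⁄ℝ], B α (β + γ) = B α β + B α γ) ∧
      (∀ α β : Ω[A⁄ℝ], B α β = - B β α) ∧
      (∀ α β γ : Ω[A⁄ℝ], B α (B β γ) + B β (B γ α) + B γ (B α β) = 0) ∧
      (∀ a b u v : A,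
        B (a • D ℝ A u) (b • D ℝ A v) =
          (a * P u b) • D ℝ A v + (b * P a v) • D ℝ A u +
            (a * b) • D ℝ A (P u v)) ∧
      -- the anchor is determined by π♯(du)(v) = {u,v} and acts by derivations
      (∀ u v : A, ρ (D ℝ A u) v = P u v) ∧
      (∀ (α : Ω[A⁄ℝ]) (a b : A), ρ α (a * b) = ρ α a * b + a * ρ α b) ∧
      -- Lie–Rinehart compatibility: [α, aβ] = π♯(α)(a) β + a [α,β]
      (∀ (a : A) (α β : Ω[A⁄ℝ]), B α (a • β) = (ρ α a) • β + a • B α β) :=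
  ⟨fun α β => hP.bracket α β, hP.anchor, hP.bracket.map_add₂,
    fun α => map_add (hP.bracket α), fun α β => hP.bracket_swap β α, hP.bracket_jacobi,
    hP.bracket_smul_D, hP.anchor_D, hP.anchor_apply_mul, hP.bracket_smul_right⟩
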